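/- arXiv:1305.5227 — 2 statements merged into one kernel-verified Lean document; each statement's English description precedes it below -/
import Mathlib

section
/- Let q_{i-1}, q_i, q_{i+1}, q_{i+2} be four consecutive points (in x-order) of the recursively constructed point set P_M, and set δ_j = δ(q_j, q_{j+1}). If δ_{i-1} > δ_i < δ_{i+1} and δ_{i-1} ≥ δ_{i+1}, then q_{i+1} lies in the convex hull of {q_{i-1}, q_i, q_{i+2}}; if instead δ_{i-1} < δ_{i+1}, then q_i lies in the convex hull of {q_{i-1}, q_{i+1}, q_{i+2}}. In particular, four consecutive points with a 'local minimum' of δ in the middle are not in convex position. -/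
/-- Twice the signed area of the triangle `a b c`: positive iff a left turn. -/
def det2 (a b c : ℝ × ℝ) : ℝ :=
  (b.1 - a.1) * (c.2 - a.2) - (b.2 - a.2) * (c.1 - a.1)

/-- A finite planar point set is in convex position if no point lies in the
convex hull of the others. -/
def ConvexPos (S : Finset (ℝ × ℝ)) : Prop :=
  ∀ p ∈ S, p ∉ convexHull ℝ ((S.erase p : Finset (ℝ × ℝ)) : Set (ℝ × ℝ))

/-- `p : Fin (2^M) → ℝ × ℝ` is a realization of the recursive point set `P_M`:
the points are ordered by increasing `x`-coordinate, and for every copy of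
`P_{t+1} = L ∪ R` (a block of `2^(t+1)` consecutive indices starting at a multiple of
`2^(t+1)`, `L` its first half and `R` its second half), every line through two points of
`L` passes below every point of `R` (left turn), and every line through two points of `R`
passes above every point of `L` (right turn as seen from the left point). -/
def Stepup (M : ℕ) (p : Fin (2 ^ M) → ℝ × ℝ) : Prop :=
  (StrictMono fun i => (p i).1) ∧
  (∀ t, t < M → ∀ b, ∀ i j k : Fin (2 ^ M),
    b * 2 ^ (t + 1) ≤ i.val → i.val < j.val → j.val < b * 2 ^ (t + 1) + 2 ^ t →
    b * 2 ^ (t + 1) + 2 ^ t ≤ k.val → k.val < (b + 1) * 2 ^ (t + 1) →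
    0 < det2 (p i) (p j) (p k)) ∧
  (∀ t, t < M → ∀ b, ∀ i j k : Fin (2 ^ M),
    b * 2 ^ (t + 1) ≤ i.val → i.val < b * 2 ^ (t + 1) + 2 ^ t →
    b * 2 ^ (t + 1) + 2 ^ t ≤ j.val → j.val < k.val → k.val < (b + 1) * 2 ^ (t + 1) →
    det2 (p j) (p k) (p i) < 0)

/-- `deltaFn M i j`: the largest `t ≤ M` such that `p_i` and `p_j` lie in a common copy of
`P_t = L ∪ R` (a block of `2^t` consecutive indices) with `p_i ∈ L` and `p_j ∈ R`. -/
def deltaFn (M i j : ℕ) : ℕ :=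
  Nat.findGreatest
    (fun t => 1 ≤ t ∧ i / 2 ^ (t - 1) % 2 = 0 ∧ j / 2 ^ (t - 1) = i / 2 ^ (t - 1) + 1) M

/-!
Write `δ(x, y) = t + 1`, where `t` is the level at which `x` and `y` are split into the two
halves of a common copy of `P_{t+1}`. As `δ(b, c)` is smaller than both `δ(a, b)` and
`δ(c, d)`, the points `b` and `c` lie in a common half at each of the levels `u = δ(a, b) - 1`
and `w = δ(c, d) - 1`. The defining turn conditions of `P_M` at these two levels then fix the
orientation of every triangle formed by the four points: if `w < u` (`w = u` is impossible by
parity), `c` lies inside the triangle `a b d`; if `u < w`, `b` lies inside the triangle `a c d`.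
-/

theorem det2_rotate (a b c : ℝ × ℝ) : det2 b c a = det2 a b c := by
  unfold det2; ring

theorem det2_swap (a b c : ℝ × ℝ) : det2 a c b = -det2 a b c := by
  unfold det2; ring

/-- Cramer's rule: the barycentric coordinates of `x` in the triangle `a b c` are
`det2 x b c`, `det2 a x c`, `det2 a b x`, each divided by `det2 a b c`. -/
theorem mem_convexHull_of_det2_nonneg {a b c x : ℝ × ℝ} (habc : 0 < det2 a b c)
    (ha : 0 ≤ det2 x b c) (hb : 0 ≤ det2 a x c) (hc : 0 ≤ det2 a b x) :
    x ∈ convexHull ℝ {a, b, c} := by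
  set w : Fin 3 → ℝ :=
    ![det2 x b c / det2 a b c, det2 a x c / det2 a b c, det2 a b x / det2 a b c]
  have hx : x = ∑ i, w i • ![a, b, c] i := by
    simp only [w, Fin.sum_univ_three, Matrix.cons_val_zero, Matrix.cons_val_one,
      Matrix.cons_val_two, Matrix.head_cons, Matrix.tail_cons]
    ext <;> simp only [Prod.fst_add, Prod.snd_add, Prod.smul_fst, Prod.smul_snd, smul_eq_mul] <;>
      field_simp <;> unfold det2 <;> ring
  rw [hx]
  refine (convex_convexHull ℝ _).sum_mem (fun i _ => ?_) ?_
    (fun i _ => subset_convexHull ℝ _ ?_)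
  · fin_cases i
    exacts [div_nonneg ha habc.le, div_nonneg hb habc.le, div_nonneg hc habc.le]
  · simp only [w, Fin.sum_univ_three, Matrix.cons_val_zero, Matrix.cons_val_one,
      Matrix.cons_val_two, Matrix.head_cons, Matrix.tail_cons]
    field_simp
    unfold det2; ring
  · fin_cases i <;> simp

theorem ConvexPos.notMem_convexHull_of_subset {S : Finset (ℝ × ℝ)} (hS : ConvexPos S)
    {x : ℝ × ℝ} {T : Set (ℝ × ℝ)} (hx : x ∈ S) (hTS : T ⊆ S) (hxT : x ∉ T) :
    x ∉ convexHull ℝ T := fun h =>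
  hS x hx <| convexHull_mono
    (fun _ hy => Finset.mem_erase.mpr ⟨ne_of_mem_of_not_mem hy hxT, hTS hy⟩) h

/-- `x` lies in the left and `y` in the right half of a common copy of `P_{t+1}`, i.e. of a
block of `2 ^ (t + 1)` consecutive indices starting at a multiple of `2 ^ (t + 1)`. -/
def IsSplit (t x y : ℕ) : Prop :=
  x / 2 ^ t % 2 = 0 ∧ y / 2 ^ t = x / 2 ^ t + 1

namespace IsSplit

variable {t x y : ℕ}

theorem two_pow_le (h : IsSplit t x y) : 2 ^ t ≤ y :=
  (Nat.one_le_div_iff (Nat.two_pow_pos t)).mp (by rw [h.2]; exact Nat.le_add_left 1 _)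

theorem lt_of_lt_two_pow {M : ℕ} (h : IsSplit t x y) (hy : y < 2 ^ M) : t < M :=
  (Nat.pow_lt_pow_iff_right one_lt_two).mp (h.two_pow_le.trans_lt hy)

theorem div_two_pow_eq_of_lt (h : IsSplit t x y) {s : ℕ} (hts : t < s) :
    x / 2 ^ s = y / 2 ^ s := by
  have hs : 2 ^ s = 2 ^ t * 2 * 2 ^ (s - (t + 1)) := by
    rw [← pow_succ, ← pow_add]; congr 1; omega
  obtain ⟨heven, hsucc⟩ := h
  have h2 : x / 2 ^ t / 2 = y / 2 ^ t / 2 := by rw [hsucc]; omega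
  simp only [hs, ← Nat.div_div_eq_div_mul, h2]

theorem of_div_eq_left {x' : ℕ} (h : IsSplit t x y) (hx : x' / 2 ^ t = x / 2 ^ t) :
    IsSplit t x' y := by
  rwa [IsSplit, hx]

theorem of_div_eq_right {y' : ℕ} (h : IsSplit t x y) (hy : y' / 2 ^ t = y / 2 ^ t) :
    IsSplit t x y' := by
  rwa [IsSplit, hy]

theorem bounds (h : IsSplit t x y) :
    x / 2 ^ t / 2 * 2 ^ (t + 1) ≤ x ∧ x < x / 2 ^ t / 2 * 2 ^ (t + 1) + 2 ^ t ∧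
      x / 2 ^ t / 2 * 2 ^ (t + 1) + 2 ^ t ≤ y ∧ y < (x / 2 ^ t / 2 + 1) * 2 ^ (t + 1) := by
  obtain ⟨heven, hsucc⟩ := h
  set b := x / 2 ^ t / 2
  have hpos := Nat.two_pow_pos t
  rw [show b * 2 ^ (t + 1) = 2 * b * 2 ^ t by ring,
    show 2 * b * 2 ^ t + 2 ^ t = (2 * b + 1) * 2 ^ t by ring,
    show (b + 1) * 2 ^ (t + 1) = (2 * b + 2) * 2 ^ t by ring,
    ← Nat.le_div_iff_mul_le hpos, ← Nat.div_lt_iff_lt_mul hpos,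
    ← Nat.le_div_iff_mul_le hpos, ← Nat.div_lt_iff_lt_mul hpos]
  omega

end IsSplit

theorem exists_isSplit {x y : ℕ} (hxy : x < y) : ∃ t, IsSplit t x y := by
  induction y using Nat.strong_induction_on generalizing x with
  | _ y ih =>
    by_cases h : x / 2 = y / 2
    · exact ⟨0, by simp only [IsSplit, pow_zero, Nat.div_one]; omega⟩
    · obtain ⟨t, ht⟩ := ih (y / 2) (by omega) (by omega : x / 2 < y / 2)
      refine ⟨t + 1, ?_⟩
      simpa only [IsSplit, pow_succ', ← Nat.div_div_eq_div_mul] using ht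

theorem exists_deltaFn_eq_isSplit {M x y : ℕ} (hxy : x < y) (hy : y < 2 ^ M) :
    ∃ t, deltaFn M x y = t + 1 ∧ IsSplit t x y := by
  obtain ⟨t, ht⟩ := exists_isSplit hxy
  obtain ⟨hpos, hsplit⟩ : 1 ≤ deltaFn M x y ∧ IsSplit (deltaFn M x y - 1) x y :=
    Nat.findGreatest_spec
      (P := fun s => 1 ≤ s ∧ x / 2 ^ (s - 1) % 2 = 0 ∧ y / 2 ^ (s - 1) = x / 2 ^ (s - 1) + 1)
      (ht.lt_of_lt_two_pow hy) ⟨by omega, ht⟩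
  exact ⟨deltaFn M x y - 1, by omega, hsplit⟩

namespace Stepup

variable {M : ℕ} {p : Fin (2 ^ M) → ℝ × ℝ}

theorem injective (hp : Stepup M p) : Function.Injective p :=
  Function.Injective.of_comp hp.1.injective

section Turns

variable {t : ℕ} {i j k : Fin (2 ^ M)}

theorem det2_pos (hp : Stepup M p) (hij : i < j) (hi : i.val / 2 ^ t = j.val / 2 ^ t)
    (hjk : IsSplit t j k) : 0 < det2 (p i) (p j) (p k) := by
  have hb : i.val / 2 ^ t / 2 = j.val / 2 ^ t / 2 := by rw [hi]
  obtain ⟨hi₀, -, -, -⟩ := (hjk.of_div_eq_left hi).bounds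
  obtain ⟨-, hj₁, hk₀, hk₁⟩ := hjk.bounds
  rw [hb] at hi₀
  exact hp.2.1 t (hjk.lt_of_lt_two_pow k.isLt) _ i j k hi₀ hij hj₁ hk₀ hk₁

theorem det2_neg (hp : Stepup M p) (hij : IsSplit t i j) (hjk : j < k)
    (hk : j.val / 2 ^ t = k.val / 2 ^ t) : det2 (p j) (p k) (p i) < 0 := by
  obtain ⟨hi₀, hi₁, hj₀, -⟩ := hij.bounds
  obtain ⟨-, -, -, hk₁⟩ := (hij.of_div_eq_right hk.symm).bounds
  exact hp.2.2 t (hij.lt_of_lt_two_pow j.isLt) _ i j k hi₀ hi₁ hj₀ hjk hk₁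

end Turns

variable {a b c d : Fin (2 ^ M)} {u v w : ℕ}

theorem mem_convexHull_of_le (hp : Stepup M p) (hbc : b < c) (hcd : c < d)
    (hu : IsSplit u a b) (hv : IsSplit v b c) (hw : IsSplit w c d) (hvw : v < w) (hwu : w ≤ u) :
    p c ∈ convexHull ℝ {p a, p b, p d} := by
  have hbc_u : b.val / 2 ^ u = c.val / 2 ^ u := hv.div_two_pow_eq_of_lt (by omega)
  have hbc_w : b.val / 2 ^ w = c.val / 2 ^ w := hv.div_two_pow_eq_of_lt hvw
  have hw_lt_u : w < u := by
    refine hwu.lt_of_ne ?_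
    rintro rfl
    obtain ⟨ha, hb⟩ := hu
    obtain ⟨hc, -⟩ := hw
    omega
  have hcd_u : c.val / 2 ^ u = d.val / 2 ^ u := hw.div_two_pow_eq_of_lt hw_lt_u
  have hbca := hp.det2_neg hu hbc hbc_u
  have hbda := hp.det2_neg hu (hbc.trans hcd) (hbc_u.trans hcd_u)
  have hcda := hp.det2_neg (hu.of_div_eq_right hbc_u.symm) hcd hcd_u
  have hbcd := hp.det2_pos hbc hbc_w hw
  rw [Set.pair_comm]
  refine mem_convexHull_of_det2_nonneg ?_ ?_ ?_ ?_
  · rw [det2_swap, ← det2_rotate]; linarith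
  · rw [det2_rotate]; exact hbcd.le
  · rw [det2_swap, ← det2_rotate]; linarith
  · rw [det2_swap, ← det2_rotate]; linarith

theorem mem_convexHull_of_lt (hp : Stepup M p) (hab : a < b) (hbc : b < c)
    (hu : IsSplit u a b) (hv : IsSplit v b c) (hw : IsSplit w c d) (hvu : v < u) (huw : u < w) :
    p b ∈ convexHull ℝ {p a, p c, p d} := by
  have hbc_u : b.val / 2 ^ u = c.val / 2 ^ u := hv.div_two_pow_eq_of_lt hvu
  have hbc_w : b.val / 2 ^ w = c.val / 2 ^ w := hv.div_two_pow_eq_of_lt (hvu.trans huw)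
  have hab_w : a.val / 2 ^ w = b.val / 2 ^ w := hu.div_two_pow_eq_of_lt huw
  have hbca := hp.det2_neg hu hbc hbc_u
  have habd := hp.det2_pos hab hab_w (hw.of_div_eq_left hbc_w)
  have hacd := hp.det2_pos (hab.trans hbc) (hab_w.trans hbc_w) hw
  have hbcd := hp.det2_pos hbc hbc_w hw
  refine mem_convexHull_of_det2_nonneg hacd hbcd.le habd.le ?_
  rw [det2_swap, ← det2_rotate]
  linarith

end Stepup

/-- No local minimum: if four points `p a, p b, p c, p d` of `P_M` (in `x`-order) have
`δ(a,b) > δ(b,c) < δ(c,d)`, then when `δ(a,b) ≥ δ(c,d)` the point `p c` lies in the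
convex hull of the other three, and when `δ(a,b) < δ(c,d)` the point `p b` does; in
particular the four points are not in convex position. -/
theorem stepping_up_no_local_min (M : ℕ) (p : Fin (2 ^ M) → ℝ × ℝ) (hp : Stepup M p)
    (a b c d : Fin (2 ^ M)) (hab : a < b) (hbc : b < c) (hcd : c < d)
    (h1 : deltaFn M b.val c.val < deltaFn M a.val b.val)
    (h2 : deltaFn M b.val c.val < deltaFn M c.val d.val) :
    (deltaFn M c.val d.val ≤ deltaFn M a.val b.val →
      p c ∈ convexHull ℝ ({p a, p b, p d} : Set (ℝ × ℝ))) ∧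
    (deltaFn M a.val b.val < deltaFn M c.val d.val →
      p b ∈ convexHull ℝ ({p a, p c, p d} : Set (ℝ × ℝ))) ∧
    ¬ ConvexPos ({p a, p b, p c, p d} : Finset (ℝ × ℝ)) := by
  obtain ⟨u, hδab, hu⟩ := exists_deltaFn_eq_isSplit hab b.isLt
  obtain ⟨v, hδbc, hv⟩ := exists_deltaFn_eq_isSplit hbc c.isLt
  obtain ⟨w, hδcd, hw⟩ := exists_deltaFn_eq_isSplit hcd d.isLt
  have hc (hle : deltaFn M c d ≤ deltaFn M a b) : p c ∈ convexHull ℝ {p a, p b, p d} :=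
    hp.mem_convexHull_of_le hbc hcd hu hv hw (by omega) (by omega)
  have hb (hlt : deltaFn M a b < deltaFn M c d) : p b ∈ convexHull ℝ {p a, p c, p d} :=
    hp.mem_convexHull_of_lt hab hbc hu hv hw (by omega) (by omega)
  refine ⟨hc, hb, fun hS => ?_⟩
  have hinj := hp.injective
  rcases le_or_gt (deltaFn M c d) (deltaFn M a b) with hle | hlt
  · refine hS.notMem_convexHull_of_subset (by simp) (by simp [Set.insert_subset_iff]) ?_ (hc hle)
    simp [hinj.ne hbc.ne', hinj.ne hcd.ne, hinj.ne (hab.trans hbc).ne']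
  · refine hS.notMem_convexHull_of_subset (by simp) (by simp [Set.insert_subset_iff]) ?_ (hb hlt)
    simp [hinj.ne hab.ne', hinj.ne hbc.ne, hinj.ne (hbc.trans hcd).ne]
end

section
/- For sufficiently large n, there exists a set P of 2^{2^{⌊n/2⌋}} points in the plane in general position and a 2-coloring χ' of the 3-element subsets of P such that no 2n points of P are in convex position with all their triples the same color under χ'. Consequently g(K³_n, K³_n) ≥ 2^{2^{cn}} for an absolute constant c > 0. -/
/-- A finite planar point set is in general position if no three of its points are collinear. -/
def GenPos (S : Finset (ℝ × ℝ)) : Prop :=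
  ∀ T ⊆ S, T.card = 3 → ¬ Collinear ℝ (T : Set (ℝ × ℝ))

/-- `GeomRamseyProp3 n q N` : every set of at least `N` points in general position in the
plane, with any `q`-coloring of its triples, contains `n` points in convex position all of
whose triples receive the same color; i.e. `g(K³_n; q) ≤ N`. -/
def GeomRamseyProp3 (n q N : ℕ) : Prop :=
  ∀ V : Finset (ℝ × ℝ), N ≤ V.card → GenPos V →
    ∀ χ : Finset (ℝ × ℝ) → Fin q,
      ∃ T ⊆ V, T.card = n ∧ ConvexPos T ∧
        ∃ c : Fin q, ∀ e ⊆ T, e.card = 3 → χ e = c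

/-!
The points are `pt s = (∑ i ∈ s, 100 ^ i, ∑ i ∈ s, 300 ^ i)` for `s ⊆ {0, …, m - 1}`, where
`m = 2 ^ ⌊n/2⌋`. With `δ s t = max (s ∆ t)`, the segment from `pt s` to `pt t` has slope
`3 ^ δ s t` up to a factor `1 ± 1/50`, so slopes compare like `δ`-values; as `δ` is an
ultrametric without equilateral triangles, no three points are collinear. A triple is colored by
`g` of its set of `δ`-values, which for `s < t < u` (by abscissa) is `{δ s t, δ t u}`, where `g`
is a 2-coloring of the pairs of `{0, …, m - 1}` with no monochromatic `n`-set (Erdős).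

Splitting along the chord through the leftmost and rightmost points, any `2n` points in convex
position contain a cap or a cup `W` of `n + 1` points. If `z` is the last point of a cap (the
first of a cup), the values `δ s z`, `s ∈ W \ {z}`, are pairwise distinct and the triple
`{s, t, z}` gets the color `g {δ s z, δ t z}`, so a monochromatic `W` would give an `n`-set
monochromatic under `g`. Running this with `⌊n/2⌋` in place of `n` gives
`g(K³_n, K³_n) > 2 ^ 2 ^ ⌊n/4⌋ ≥ 2 ^ 2 ^ (n/8)`.
-/

open Finset
open scoped Nat symmDiff

section Ramsey

theorem card_filter_forall_eq_mul_pow {α β : Type*} [Fintype α] [DecidableEq α] [Fintype β]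
    [DecidableEq β] (A : Finset α) (b : β) :
    #{f : α → β | ∀ a ∈ A, f a = b} * Fintype.card β ^ #A =
      Fintype.card β ^ Fintype.card α := by
  have hpi : ({f : α → β | ∀ a ∈ A, f a = b} : Finset (α → β)) =
      Fintype.piFinset fun a => if a ∈ A then {b} else univ := by
    ext f
    simp only [mem_filter, mem_univ, true_and, Fintype.mem_piFinset]
    refine forall_congr' fun a => ?_
    split_ifs <;> simp [*]
  rw [hpi, Fintype.card_piFinset, ← card_compl_add_card A, pow_add]
  congr 1
  rw [prod_apply_ite]
  simp [compl_eq_univ_sdiff, filter_notMem_eq_sdiff]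

theorem exists_pairColoring_not_monochromatic {V C : Type*} [Fintype V] [DecidableEq V]
    [Fintype C] [DecidableEq C] [Nonempty C] {n : ℕ}
    (h : Fintype.card C * (Fintype.card V).choose n < Fintype.card C ^ n.choose 2) :
    ∃ γ : Finset V → C, ∀ S : Finset V, #S = n → ∀ c, ∃ e ⊆ S, #e = 2 ∧ γ e ≠ c := by
  by_contra! hbad
  set k := Fintype.card C
  have hcover : (univ : Finset (Finset V → C)) ⊆ (powersetCard n univ ×ˢ univ).biUnion
      fun Sc : Finset V × C => {γ | ∀ e ∈ Sc.1.powersetCard 2, γ e = Sc.2} := by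
    intro γ _
    obtain ⟨S, hS, c, hc⟩ := hbad γ
    simp only [mem_biUnion, mem_product, mem_powersetCard, mem_filter]
    exact ⟨(S, c), ⟨⟨subset_univ S, hS⟩, mem_univ c⟩, mem_univ γ, fun e he => hc e he.1 he.2⟩
  have hcount : k ^ Fintype.card (Finset V) * k ^ n.choose 2 ≤
      k * (Fintype.card V).choose n * k ^ Fintype.card (Finset V) := by
    calc _ = #(univ : Finset (Finset V → C)) * k ^ n.choose 2 := by
          rw [card_univ, Fintype.card_fun]
      _ ≤ (∑ Sc ∈ powersetCard n univ ×ˢ univ,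
          #{γ : Finset V → C | ∀ e ∈ Sc.1.powersetCard 2, γ e = Sc.2}) * k ^ n.choose 2 :=
          Nat.mul_le_mul_right _ ((card_le_card hcover).trans card_biUnion_le)
      _ = ∑ _Sc ∈ powersetCard n (univ : Finset V) ×ˢ (univ : Finset C),
          k ^ Fintype.card (Finset V) := by
          rw [sum_mul]
          refine sum_congr rfl fun Sc hSc => ?_
          rw [← card_filter_forall_eq_mul_pow, card_powersetCard,
            (mem_powersetCard.mp (mem_product.mp hSc).1).2]
      _ = _ := by
          rw [sum_const, card_product, card_powersetCard, card_univ, card_univ, smul_eq_mul]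
          ring
  have hk : 0 < k := Fintype.card_pos
  have := hcount.trans_lt (Nat.mul_lt_mul_of_pos_right h (pow_pos hk _))
  rw [mul_comm] at this
  exact lt_irrefl _ this

theorem exists_pairColoring_range_not_monochromatic {C : Type*} [Fintype C] [DecidableEq C]
    [Nonempty C] {m n : ℕ} (h : Fintype.card C * m.choose n < Fintype.card C ^ n.choose 2) :
    ∃ g : Finset ℕ → C, ∀ S ⊆ range m, #S = n → ∀ c, ∃ e ⊆ S, #e = 2 ∧ g e ≠ c := by
  obtain ⟨γ, hγ⟩ := exists_pairColoring_not_monochromatic (V := Fin m) (C := C) (n := n)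
    (by rwa [Fintype.card_fin])
  refine ⟨fun e => γ (e.preimage Fin.valEmbedding Fin.valEmbedding.injective.injOn), ?_⟩
  intro S hS hcard c
  rw [← Nat.Iio_eq_range, ← Fin.map_valEmbedding_univ, subset_map_iff] at hS
  obtain ⟨S', -, rfl⟩ := hS
  obtain ⟨e', he'S', he', hne⟩ := hγ S' (by rwa [card_map] at hcard) c
  exact ⟨e'.map Fin.valEmbedding, map_subset_map.mpr he'S', by rwa [card_map],
    by simpa only [preimage_map] using hne⟩

theorem two_mul_choose_lt_two_pow_choose {n : ℕ} (hn : 3 ≤ n) :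
    2 * (2 ^ (n / 2)).choose n < 2 ^ n.choose 2 := by
  have hdesc : n ! * (2 ^ (n / 2)).choose n < 2 ^ (n / 2 * n) := by
    rw [← Nat.descFactorial_eq_factorial_mul_choose, pow_mul]
    exact Nat.descFactorial_lt_pow (by positivity) (by omega)
  have hexp : n / 2 * n + 1 ≤ n.choose 2 + (n / 2 + 1) := by
    have : n / 2 * (n - 1) ≤ n.choose 2 := by
      rw [Nat.choose_two_right, Nat.le_div_iff_mul_le two_pos, mul_right_comm]
      exact Nat.mul_le_mul_right _ (Nat.div_mul_le_self n 2)
    have : n / 2 * n = n / 2 * (n - 1) + n / 2 := by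
      rw [← Nat.mul_add_one, Nat.sub_add_cancel (by omega)]
    omega
  have hfact : 2 ^ (n / 2 + 1) ≤ n ! := by
    have := Nat.factorial_mul_pow_le_factorial (m := 1) (n := n - 1)
    rw [Nat.factorial_one, one_mul, show 1 + (n - 1) = n by omega] at this
    exact (Nat.pow_le_pow_right two_pos (by omega)).trans this
  refine Nat.lt_of_mul_lt_mul_left (a := n !) ?_
  calc n ! * (2 * (2 ^ (n / 2)).choose n) < 2 ^ (n / 2 * n + 1) := by
        rw [pow_succ]; linarith
    _ ≤ 2 ^ (n.choose 2 + (n / 2 + 1)) := Nat.pow_le_pow_right two_pos hexp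
    _ ≤ n ! * 2 ^ n.choose 2 := by
        rw [pow_add, mul_comm]; exact Nat.mul_le_mul_right _ hfact

end Ramsey

theorem injOn_of_lt_imp_ne {α β γ : Type*} [LinearOrder γ] {S : Set α} {f : α → β} {key : α → γ}
    (hkey : Set.InjOn key S) (h : ∀ a ∈ S, ∀ b ∈ S, key a < key b → f a ≠ f b) :
    Set.InjOn f S := by
  intro a ha b hb hab
  by_contra hne
  rcases lt_or_gt_of_ne (hkey.ne ha hb hne) with hlt | hlt
  exacts [h a ha b hb hlt hab, h b hb a ha hlt hab.symm]

section Plane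

noncomputable def lineSlope (p q : ℝ × ℝ) : ℝ := (q.2 - p.2) / (q.1 - p.1)

noncomputable def lineY (p q : ℝ × ℝ) (x : ℝ) : ℝ := p.2 + lineSlope p q * (x - p.1)

theorem lineSlope_comm (p q : ℝ × ℝ) : lineSlope p q = lineSlope q p := by
  rw [lineSlope, lineSlope, ← neg_div_neg_eq, neg_sub, neg_sub]

theorem lineY_left (p q : ℝ × ℝ) : lineY p q p.1 = p.2 := by simp [lineY]

theorem lineY_right {p q : ℝ × ℝ} (h : p.1 ≠ q.1) : lineY p q q.1 = q.2 := by
  rw [lineY, lineSlope, div_mul_cancel₀ _ (sub_ne_zero.mpr h.symm)]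
  ring

variable {p q r : ℝ × ℝ}

theorem lineSlope_le_lineSlope_iff_le_lineY (hpq : p.1 < q.1) (hqr : q.1 < r.1) :
    lineSlope p q ≤ lineSlope q r ↔ q.2 ≤ lineY p r q.1 := by
  have h₁ : 0 < q.1 - p.1 := sub_pos.mpr hpq
  have h₂ : 0 < r.1 - q.1 := sub_pos.mpr hqr
  rw [lineY, lineSlope, lineSlope, lineSlope, div_le_div_iff₀ h₁ h₂, ← sub_le_iff_le_add',
    div_mul_eq_mul_div, le_div_iff₀ (by linarith)]
  constructor <;> intro h <;> nlinarith

theorem lineSlope_le_lineSlope_iff_lineY_le (hpq : p.1 < q.1) (hqr : q.1 < r.1) :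
    lineSlope q r ≤ lineSlope p q ↔ lineY p r q.1 ≤ q.2 := by
  have h₁ : 0 < q.1 - p.1 := sub_pos.mpr hpq
  have h₂ : 0 < r.1 - q.1 := sub_pos.mpr hqr
  rw [lineY, lineSlope, lineSlope, lineSlope, div_le_div_iff₀ h₂ h₁, ← le_sub_iff_add_le',
    div_mul_eq_mul_div, div_le_iff₀ (by linarith)]
  constructor <;> intro h <;> nlinarith

theorem mk_lineY_mem_segment {x : ℝ} (hpq : p.1 < q.1) (hx : x ∈ Set.Icc p.1 q.1) :
    (x, lineY p q x) ∈ segment ℝ p q := by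
  have h : 0 < q.1 - p.1 := sub_pos.mpr hpq
  rw [segment_eq_image_lineMap]
  refine ⟨(x - p.1) / (q.1 - p.1), ⟨div_nonneg (by linarith [hx.1]) h.le,
    div_le_one_of_le₀ (by linarith [hx.2]) h.le⟩, ?_⟩
  ext <;> simp [AffineMap.lineMap_apply, lineY, lineSlope] <;> field_simp <;> ring

theorem mem_convexHull_of_lineY_le_le_lineY {u v u' v' : ℝ × ℝ} (huv : u.1 < v.1)
    (hu'v' : u'.1 < v'.1) (hq : q.1 ∈ Set.Icc u.1 v.1) (hq' : q.1 ∈ Set.Icc u'.1 v'.1)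
    (hlow : lineY u v q.1 ≤ q.2) (hhigh : q.2 ≤ lineY u' v' q.1) :
    q ∈ convexHull ℝ {u, v, u', v'} := by
  have hvert : q ∈ segment ℝ (q.1, lineY u v q.1) (q.1, lineY u' v' q.1) := by
    rw [← Prod.image_mk_segment_right, segment_eq_Icc (hlow.trans hhigh)]
    exact ⟨q.2, ⟨hlow, hhigh⟩, rfl⟩
  exact (convex_convexHull ℝ _).segment_subset
    (segment_subset_convexHull (by simp) (by simp) (mk_lineY_mem_segment huv hq))
    (segment_subset_convexHull (by simp) (by simp) (mk_lineY_mem_segment hu'v' hq')) hvert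

theorem Collinear.lineSlope_eq {S : Set (ℝ × ℝ)} (h : Collinear ℝ S) {a b c d : ℝ × ℝ}
    (ha : a ∈ S) (hb : b ∈ S) (hc : c ∈ S) (hd : d ∈ S) (hab : a.1 ≠ b.1) (hcd : c.1 ≠ d.1) :
    lineSlope a b = lineSlope c d := by
  obtain ⟨p₀, v, hv⟩ := (collinear_iff_exists_forall_eq_smul_vadd S).mp h
  have key : ∀ x ∈ S, ∀ y ∈ S, x.1 ≠ y.1 → lineSlope x y = v.2 / v.1 := by
    intro x hx y hy hxy
    obtain ⟨s, rfl⟩ := hv x hx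
    obtain ⟨t, rfl⟩ := hv y hy
    have hst : t - s ≠ 0 := fun h0 => hxy (by simp [sub_eq_zero.mp h0])
    simp only [lineSlope, vadd_eq_add, Prod.fst_add, Prod.snd_add, Prod.smul_fst, Prod.smul_snd,
      smul_eq_mul, add_sub_add_right_eq_sub, ← sub_mul]
    exact mul_div_mul_left _ _ hst
  rw [key a ha b hb hab, key c hc d hd hcd]

end Plane

section ConvexPosition

def IsCap (W : Finset (ℝ × ℝ)) : Prop :=
  ∀ p ∈ W, ∀ q ∈ W, ∀ r ∈ W, p.1 < q.1 → q.1 < r.1 → lineSlope q r < lineSlope p q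

def IsCup (W : Finset (ℝ × ℝ)) : Prop :=
  ∀ p ∈ W, ∀ q ∈ W, ∀ r ∈ W, p.1 < q.1 → q.1 < r.1 → lineSlope p q < lineSlope q r

variable {T : Finset (ℝ × ℝ)}

theorem ConvexPos.notMem_convexHull (hT : ConvexPos T) {q : ℝ × ℝ} (hq : q ∈ T)
    {S : Set (ℝ × ℝ)} (hS : S ⊆ T) (hqS : q ∉ S) : q ∉ convexHull ℝ S :=
  fun h => hT q hq (convexHull_mono (fun x hx => by
    simpa [ne_of_mem_of_not_mem hx hqS] using hS hx) h)

theorem ConvexPos.subset (hT : ConvexPos T) {T' : Finset (ℝ × ℝ)} (h : T' ⊆ T) :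
    ConvexPos T' :=
  fun q hq => hT.notMem_convexHull (h hq) ((coe_subset.mpr (erase_subset q T')).trans
    (coe_subset.mpr h)) (by simp)

section Chord

variable {a b : ℝ × ℝ} (hT : ConvexPos T) (ha : a ∈ T) (hb : b ∈ T) (hab : a.1 < b.1)
  (hmin : ∀ p ∈ T, a.1 ≤ p.1) (hmax : ∀ p ∈ T, p.1 ≤ b.1)
include hT ha hb hab hmin hmax

theorem ConvexPos.isCap_filter_lineY_le : IsCap {p ∈ T | lineY a b p.1 ≤ p.2} := by
  intro p hp q hq r hr hpq hqr
  simp only [mem_filter] at hp hq hr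
  by_contra hle
  rw [not_lt, lineSlope_le_lineSlope_iff_le_lineY hpq hqr] at hle
  refine hT.notMem_convexHull hq.1 (S := {a, b, p, r}) (by simp [Set.insert_subset_iff, *]) ?_
    (mem_convexHull_of_lineY_le_le_lineY hab (hpq.trans hqr) ⟨hmin q hq.1, hmax q hq.1⟩
      ⟨hpq.le, hqr.le⟩ hq.2 hle)
  simp only [Set.mem_insert_iff, Set.mem_singleton_iff]
  rintro (h | h | h | h) <;> have := congrArg Prod.fst h <;> linarith [hmin p hp.1, hmax r hr.1]

theorem ConvexPos.isCup_filter_le_lineY : IsCup {p ∈ T | p.2 ≤ lineY a b p.1} := by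
  intro p hp q hq r hr hpq hqr
  simp only [mem_filter] at hp hq hr
  by_contra hle
  rw [not_lt, lineSlope_le_lineSlope_iff_lineY_le hpq hqr] at hle
  refine hT.notMem_convexHull hq.1 (S := {p, r, a, b}) (by simp [Set.insert_subset_iff, *]) ?_
    (mem_convexHull_of_lineY_le_le_lineY (hpq.trans hqr) hab ⟨hpq.le, hqr.le⟩
      ⟨hmin q hq.1, hmax q hq.1⟩ hle hq.2)
  simp only [Set.mem_insert_iff, Set.mem_singleton_iff]
  rintro (h | h | h | h) <;> have := congrArg Prod.fst h <;> linarith [hmin p hp.1, hmax r hr.1]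

end Chord

theorem ConvexPos.exists_isCap_or_isCup (hT : ConvexPos T)
    (hinj : Set.InjOn Prod.fst (T : Set (ℝ × ℝ))) (hcard : 2 ≤ #T) :
    ∃ W ⊆ T, #T + 2 ≤ 2 * #W ∧ (IsCap W ∨ IsCup W) := by
  have hne : T.Nonempty := card_pos.mp (by omega)
  obtain ⟨a, ha, hmin⟩ := T.exists_min_image Prod.fst hne
  obtain ⟨b, hb, hmax⟩ := T.exists_max_image Prod.fst hne
  have hab : a.1 < b.1 := by
    by_contra! hba
    refine absurd (card_le_one.mpr fun p hp q hq => hinj hp hq ?_) (by omega)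
    linarith [hmin p hp, hmax p hp, hmin q hq, hmax q hq]
  set U := {p ∈ T | lineY a b p.1 ≤ p.2}
  set L := {p ∈ T | p.2 ≤ lineY a b p.1}
  have hUL : #T + 2 ≤ #U + #L := by
    have hunion : U ∪ L = T := by
      rw [← filter_or]
      exact filter_true_of_mem fun p _ => le_total _ _
    have hinter : {a, b} ⊆ U ∩ L := by
      simp [U, L, insert_subset_iff, ha, hb, lineY_left, lineY_right hab.ne]
    have := card_le_card hinter
    rw [card_pair (fun h => hab.ne (congrArg Prod.fst h))] at this
    rw [← card_union_add_card_inter, hunion]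
    omega
  rcases le_total #U #L with h | h
  · exact ⟨L, filter_subset _ _, by omega, .inr (hT.isCup_filter_le_lineY ha hb hab hmin hmax)⟩
  · exact ⟨U, filter_subset _ _, by omega, .inl (hT.isCap_filter_lineY_le ha hb hab hmin hmax)⟩

end ConvexPosition

namespace SteppingUp

def δ (s t : Finset ℕ) : ℕ := (s ∆ t).sup id

theorem δ_comm (s t : Finset ℕ) : δ s t = δ t s := by rw [δ, δ, symmDiff_comm]

theorem δ_mem_symmDiff {s t : Finset ℕ} (h : s ≠ t) : δ s t ∈ s ∆ t := by
  obtain ⟨i, hi, hδ⟩ := exists_mem_eq_sup (s ∆ t)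
    (by simpa [nonempty_iff_ne_empty, symmDiff_eq_bot] using h) id
  rwa [δ, hδ]

theorem le_δ {s t : Finset ℕ} {i : ℕ} (h : i ∈ s ∆ t) : i ≤ δ s t := le_sup (f := id) h

theorem δ_le_max (s t u : Finset ℕ) : δ s u ≤ max (δ s t) (δ t u) :=
  Finset.sup_le fun i hi => by
    rcases mem_union.mp (symmDiff_triangle s t u hi) with h | h
    · exact le_max_of_le_left (le_δ h)
    · exact le_max_of_le_right (le_δ h)

theorem δ_eq_of_lt {s t u : Finset ℕ} (h : δ s t < δ t u) : δ s u = δ t u := by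
  have h₁ := δ_le_max s t u
  have h₂ := δ_le_max t s u
  rw [δ_comm t s] at h₂
  omega

theorem δ_ne_of_eq {s t u : Finset ℕ} (hst : s ≠ t) (htu : t ≠ u) (hsu : s ≠ u)
    (h : δ s t = δ t u) : δ s u ≠ δ s t := by
  intro h'
  have h₁ := δ_mem_symmDiff hst
  have h₂ := δ_mem_symmDiff htu
  have h₃ := δ_mem_symmDiff hsu
  rw [← h] at h₂
  rw [h'] at h₃
  simp only [mem_symmDiff] at h₁ h₂ h₃
  tauto

theorem δ_lt_of_subset_range {m : ℕ} {s t : Finset ℕ} (hs : s ⊆ range m) (ht : t ⊆ range m)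
    (h : s ≠ t) : δ s t < m := by
  rcases mem_symmDiff.mp (δ_mem_symmDiff h) with ⟨h', -⟩ | ⟨h', -⟩
  exacts [mem_range.mp (hs h'), mem_range.mp (ht h')]

def coord (r : ℝ) (s : Finset ℕ) : ℝ := ∑ i ∈ s, r ^ i

theorem coord_lt_of_forall_lt {r : ℝ} (hr : 1 < r) {s : Finset ℕ} {l : ℕ}
    (hs : ∀ i ∈ s, i < l) : coord r s < r ^ l / (r - 1) :=
  calc coord r s ≤ ∑ i ∈ range l, r ^ i :=
        sum_le_sum_of_subset_of_nonneg (fun i hi => mem_range.mpr (hs i hi))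
          fun i _ _ => by positivity
    _ = (r ^ l - 1) / (r - 1) := geom_sum_eq hr.ne' l
    _ < r ^ l / (r - 1) := div_lt_div_of_pos_right (by linarith) (by linarith)

theorem abs_coord_sub_coord_sub_pow_lt {r : ℝ} (hr : 1 < r) {s t : Finset ℕ} (hst : s ≠ t)
    (ht : δ s t ∈ t) : |coord r t - coord r s - r ^ δ s t| < r ^ δ s t / (r - 1) := by
  set l := δ s t
  have hls : l ∉ s := by
    have := δ_mem_symmDiff hst
    simp only [mem_symmDiff] at this
    tauto
  have hlt : ∀ i ∈ s ∆ t, i ≠ l → i < l := fun i hi hil => lt_of_le_of_ne (le_δ hi) hil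
  have hA := coord_lt_of_forall_lt hr (s := (t \ s).erase l) (l := l) fun i hi =>
    hlt i (mem_symmDiff.mpr (.inr (mem_sdiff.mp (mem_of_mem_erase hi)))) (ne_of_mem_erase hi)
  have hB := coord_lt_of_forall_lt hr (s := s \ t) (l := l) fun i hi =>
    hlt i (mem_symmDiff.mpr (.inl (mem_sdiff.mp hi))) (ne_of_mem_of_not_mem (mem_sdiff.mp hi).1 hls)
  have hA₀ : 0 ≤ coord r ((t \ s).erase l) := sum_nonneg fun i _ => by positivity
  have hB₀ : 0 ≤ coord r (s \ t) := sum_nonneg fun i _ => by positivity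
  have hsplit : coord r t - coord r s - r ^ l = coord r ((t \ s).erase l) - coord r (s \ t) := by
    rw [coord, coord, ← sum_sdiff_sub_sum_sdiff, ← add_sum_erase _ _ (mem_sdiff.mpr ⟨ht, hls⟩),
      coord, coord]
    ring
  rw [hsplit, abs_sub_lt_iff]
  constructor <;> linarith

theorem coord_lt_coord {r : ℝ} (hr : 2 ≤ r) {s t : Finset ℕ} (hst : s ≠ t) (ht : δ s t ∈ t) :
    coord r s < coord r t := by
  have h := abs_lt.mp (abs_coord_sub_coord_sub_pow_lt (by linarith) hst ht)
  have : r ^ δ s t / (r - 1) ≤ r ^ δ s t := div_le_self (by positivity) (by linarith)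
  linarith [h.1]

theorem δ_mem_of_coord_lt {r : ℝ} (hr : 2 ≤ r) {s t : Finset ℕ} (h : coord r s < coord r t) :
    δ s t ∈ t := by
  have hst : s ≠ t := by rintro rfl; exact lt_irrefl _ h
  rcases mem_symmDiff.mp (δ_mem_symmDiff hst) with ⟨hs, -⟩ | ⟨ht, -⟩
  · rw [δ_comm] at hs
    exact absurd (coord_lt_coord hr hst.symm hs) h.not_gt
  · exact ht

theorem coord_injective {r : ℝ} (hr : 2 ≤ r) : Function.Injective (coord r) := by
  intro s t h
  by_contra hst
  rcases mem_symmDiff.mp (δ_mem_symmDiff hst) with ⟨hs, -⟩ | ⟨ht, -⟩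
  · rw [δ_comm] at hs
    exact (coord_lt_coord hr (Ne.symm hst) hs).ne h.symm
  · exact (coord_lt_coord hr hst ht).ne h

theorem ne_of_coord_lt {r : ℝ} {s t : Finset ℕ} (h : coord r s < coord r t) : s ≠ t := by
  rintro rfl; exact lt_irrefl _ h

noncomputable def pt (s : Finset ℕ) : ℝ × ℝ := (coord 100 s, coord 300 s)

theorem pt_injective : Function.Injective pt := fun _ _ h =>
  coord_injective (by norm_num) (congrArg Prod.fst h)

theorem lineSlope_pt_mem_Icc {s t : Finset ℕ} (hst : s ≠ t) :
    lineSlope (pt s) (pt t) ∈ Set.Icc (49 / 50 * 3 ^ δ s t) (51 / 50 * 3 ^ δ s t) := by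
  wlog ht : δ s t ∈ t generalizing s t
  · have hs : δ t s ∈ s := by
      rw [δ_comm]
      simpa [mem_symmDiff, ht] using δ_mem_symmDiff hst
    rw [lineSlope_comm, δ_comm]
    exact this hst.symm hs
  have hx := abs_lt.mp (abs_coord_sub_coord_sub_pow_lt (r := 100) (by norm_num) hst ht)
  have hy := abs_lt.mp (abs_coord_sub_coord_sub_pow_lt (r := 300) (by norm_num) hst ht)
  have h300 : (300 : ℝ) ^ δ s t = 3 ^ δ s t * 100 ^ δ s t := by rw [← mul_pow]; norm_num
  have h3 : (0 : ℝ) < 3 ^ δ s t := by positivity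
  have h100 : (0 : ℝ) < 100 ^ δ s t := by positivity
  norm_num only [h300] at hx hy
  have hpos : 0 < coord 100 t - coord 100 s := by linarith [hx.1]
  rw [lineSlope, pt, pt, Set.mem_Icc, le_div_iff₀ hpos, div_le_iff₀ hpos]
  constructor <;> nlinarith [hx.1, hx.2, hy.1, hy.2]

theorem lineSlope_lt_of_δ_lt {s t u v : Finset ℕ} (hst : s ≠ t) (huv : u ≠ v)
    (h : δ s t < δ u v) : lineSlope (pt s) (pt t) < lineSlope (pt u) (pt v) := by
  have h₁ := (lineSlope_pt_mem_Icc hst).2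
  have h₂ := (lineSlope_pt_mem_Icc huv).1
  have h₃ : (3 : ℝ) ^ (δ s t + 1) ≤ 3 ^ δ u v := pow_le_pow_right₀ (by norm_num) h
  have : (0 : ℝ) < 3 ^ δ s t := by positivity
  rw [pow_succ] at h₃
  linarith

theorem δ_le_of_lineSlope_lt {s t u v : Finset ℕ} (hst : s ≠ t) (huv : u ≠ v)
    (h : lineSlope (pt s) (pt t) < lineSlope (pt u) (pt v)) : δ s t ≤ δ u v :=
  not_lt.mp fun h' => (lineSlope_lt_of_δ_lt huv hst h').not_gt h

theorem δ_ne_δ_of_coord_lt {s t u : Finset ℕ} (h₁ : coord 100 s < coord 100 t)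
    (h₂ : coord 100 t < coord 100 u) : δ s t ≠ δ t u := by
  have hst := δ_mem_of_coord_lt (by norm_num) h₁
  have htu := δ_mem_symmDiff (s := t) (t := u) (by rintro rfl; exact lt_irrefl _ h₂)
  have hu := δ_mem_of_coord_lt (by norm_num) h₂
  intro h
  rw [h] at hst
  simp only [mem_symmDiff] at htu
  tauto

noncomputable def pointSet (m : ℕ) : Finset (ℝ × ℝ) := (range m).powerset.image pt

theorem card_pointSet (m : ℕ) : #(pointSet m) = 2 ^ m := by
  rw [pointSet, card_image_of_injective _ pt_injective, card_powerset, card_range]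

theorem injOn_fst_pointSet (m : ℕ) : Set.InjOn Prod.fst (pointSet m : Set (ℝ × ℝ)) := by
  intro p hp q hq h
  obtain ⟨s, -, rfl⟩ := mem_image.mp (mem_coe.mp hp)
  obtain ⟨t, -, rfl⟩ := mem_image.mp (mem_coe.mp hq)
  rw [coord_injective (by norm_num) h]

theorem δ_eq_of_lineSlope_eq {s t u v : Finset ℕ} (hst : s ≠ t) (huv : u ≠ v)
    (h : lineSlope (pt s) (pt t) = lineSlope (pt u) (pt v)) : δ s t = δ u v :=
  le_antisymm (not_lt.mp fun h' => (lineSlope_lt_of_δ_lt huv hst h').ne' h)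
    (not_lt.mp fun h' => (lineSlope_lt_of_δ_lt hst huv h').ne h)

theorem δ_eq_of_collinear {S : Set (ℝ × ℝ)} (h : Collinear ℝ S) {s t u v : Finset ℕ}
    (hs : pt s ∈ S) (ht : pt t ∈ S) (hu : pt u ∈ S) (hv : pt v ∈ S) (hst : s ≠ t) (huv : u ≠ v) :
    δ s t = δ u v :=
  δ_eq_of_lineSlope_eq hst huv (h.lineSlope_eq hs ht hu hv
    ((coord_injective (by norm_num)).ne hst) ((coord_injective (by norm_num)).ne huv))

theorem genPos_pointSet (m : ℕ) : GenPos (pointSet m) := by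
  intro T hT hT3 hcol
  obtain ⟨p, q, r, hpq, hpr, hqr, rfl⟩ := card_eq_three.mp hT3
  obtain ⟨s, -, rfl⟩ := mem_image.mp (hT (mem_insert_self p _))
  obtain ⟨t, -, rfl⟩ := mem_image.mp (hT (mem_insert_of_mem (mem_insert_self q _)))
  obtain ⟨u, -, rfl⟩ := mem_image.mp (hT (mem_insert_of_mem (mem_insert_of_mem
    (mem_singleton_self r))))
  have hst : s ≠ t := fun h => hpq (h ▸ rfl)
  have htu : t ≠ u := fun h => hqr (h ▸ rfl)
  have hsu : s ≠ u := fun h => hpr (h ▸ rfl)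
  exact δ_ne_of_eq hst htu hsu
    (δ_eq_of_collinear hcol (by simp) (by simp) (by simp) (by simp) hst htu)
    (δ_eq_of_collinear hcol (by simp) (by simp) (by simp) (by simp) hsu hst)

def deltaSet (A : Finset (Finset ℕ)) : Finset ℕ := A.offDiag.image fun x => δ x.1 x.2

theorem mem_deltaSet {A : Finset (Finset ℕ)} {k : ℕ} :
    k ∈ deltaSet A ↔ ∃ s ∈ A, ∃ t ∈ A, s ≠ t ∧ δ s t = k := by
  simp [deltaSet, and_assoc]

theorem deltaSet_triple {s t z : Finset ℕ} (hs : s ≠ z) (ht : t ≠ z) (h : δ s z ≠ δ t z) :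
    deltaSet {s, t, z} = {δ s z, δ t z} := by
  have hst : δ s t = δ s z ∨ δ s t = δ t z := by
    rcases h.lt_or_gt with h' | h'
    · rw [δ_comm t z] at h'
      exact .inr ((δ_eq_of_lt h').trans (δ_comm z t))
    · rw [δ_comm s z] at h'
      exact .inl (by rw [δ_comm, δ_eq_of_lt h', δ_comm])
  ext k
  simp only [mem_deltaSet, mem_insert, mem_singleton]
  constructor
  · rintro ⟨a, ha, b, hb, hab, rfl⟩
    rcases ha with rfl | rfl | rfl <;> rcases hb with rfl | rfl | rfl <;>
      simp_all [δ_comm]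
  · rintro (rfl | rfl)
    exacts [⟨s, .inl rfl, z, .inr (.inr rfl), hs, rfl⟩,
      ⟨t, .inr (.inl rfl), z, .inr (.inr rfl), ht, rfl⟩]

noncomputable def stepUpColoring {C : Type*} (g : Finset ℕ → C) (e : Finset (ℝ × ℝ)) : C :=
  g (deltaSet (e.image (Function.invFun pt)))

theorem stepUpColoring_image {C : Type*} (g : Finset ℕ → C) (B : Finset (Finset ℕ)) :
    stepUpColoring g (B.image pt) = g (deltaSet B) := by
  rw [stepUpColoring, image_image, (Function.leftInverse_invFun pt_injective).comp_eq_id,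
    image_id]

theorem exists_deltaSet_eq {A : Finset (Finset ℕ)} {z : Finset ℕ} (hz : z ∈ A) {e : Finset ℕ}
    (he : e ⊆ (A.erase z).image (δ · z)) (he2 : #e = 2) :
    ∃ B ⊆ A, #B = 3 ∧ deltaSet B = e := by
  obtain ⟨k, l, hkl, rfl⟩ := card_eq_two.mp he2
  obtain ⟨s, hs, rfl⟩ := mem_image.mp (he (mem_insert_self k _))
  obtain ⟨t, ht, rfl⟩ := mem_image.mp (he (mem_insert_of_mem (mem_singleton_self l)))
  have hsz := ne_of_mem_erase hs
  have htz := ne_of_mem_erase ht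
  refine ⟨{s, t, z}, ?_, card_eq_three.mpr ⟨s, t, z, fun h => hkl (h ▸ rfl), hsz, htz, rfl⟩,
    deltaSet_triple hsz htz hkl⟩
  simp [insert_subset_iff, mem_of_mem_erase hs, mem_of_mem_erase ht, hz]

theorem injOn_δ_of_isCap {A : Finset (Finset ℕ)} (hA : IsCap (A.image pt)) {z : Finset ℕ}
    (hz : z ∈ A) (hmax : ∀ s ∈ A, coord 100 s ≤ coord 100 z) :
    Set.InjOn (δ · z) (A.erase z) := by
  refine injOn_of_lt_imp_ne (key := coord 100) (coord_injective (by norm_num)).injOn ?_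
  intro s hs t ht hst
  have htz : coord 100 t < coord 100 z := (hmax t (mem_of_mem_erase ht)).lt_of_ne
    ((coord_injective (by norm_num)).ne (ne_of_mem_erase ht))
  have hslope := hA _ (mem_image_of_mem pt (mem_of_mem_erase hs)) _
    (mem_image_of_mem pt (mem_of_mem_erase ht)) _ (mem_image_of_mem pt hz) hst htz
  have hlt : δ t z < δ s t :=
    (δ_le_of_lineSlope_lt (ne_of_mem_erase ht) (ne_of_coord_lt hst) hslope).lt_of_ne
      (δ_ne_δ_of_coord_lt hst htz).symm
  rw [δ_comm t z, δ_comm s t] at hlt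
  rw [δ_comm s z, δ_eq_of_lt hlt, δ_comm t z]
  exact hlt.ne'

theorem injOn_δ_of_isCup {A : Finset (Finset ℕ)} (hA : IsCup (A.image pt)) {z : Finset ℕ}
    (hz : z ∈ A) (hmin : ∀ s ∈ A, coord 100 z ≤ coord 100 s) :
    Set.InjOn (δ · z) (A.erase z) := by
  refine injOn_of_lt_imp_ne (key := coord 100) (coord_injective (by norm_num)).injOn ?_
  intro s hs t ht hst
  have hzs : coord 100 z < coord 100 s := (hmin s (mem_of_mem_erase hs)).lt_of_ne
    ((coord_injective (by norm_num)).ne (ne_of_mem_erase hs).symm)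
  have hslope := hA _ (mem_image_of_mem pt hz) _ (mem_image_of_mem pt (mem_of_mem_erase hs)) _
    (mem_image_of_mem pt (mem_of_mem_erase ht)) hzs hst
  have hlt : δ z s < δ s t :=
    (δ_le_of_lineSlope_lt (ne_of_coord_lt hzs) (ne_of_coord_lt hst) hslope).lt_of_ne
      (δ_ne_δ_of_coord_lt hzs hst)
  rw [δ_comm s z, δ_comm t z, δ_eq_of_lt hlt]
  exact hlt.ne

theorem exists_injOn_δ {A : Finset (Finset ℕ)} (hA : A.Nonempty)
    (h : IsCap (A.image pt) ∨ IsCup (A.image pt)) : ∃ z ∈ A, Set.InjOn (δ · z) (A.erase z) := by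
  rcases h with h | h
  · obtain ⟨z, hz, hmax⟩ := A.exists_max_image (coord 100) hA
    exact ⟨z, hz, injOn_δ_of_isCap h hz hmax⟩
  · obtain ⟨z, hz, hmin⟩ := A.exists_min_image (coord 100) hA
    exact ⟨z, hz, injOn_δ_of_isCup h hz hmin⟩

theorem not_exists_monochromatic_convexPos {C : Type*} {m n : ℕ} (hn : n ≠ 0)
    {g : Finset ℕ → C} (hg : ∀ S ⊆ range m, #S = n → ∀ c, ∃ e ⊆ S, #e = 2 ∧ g e ≠ c) :
    ¬ ∃ T ⊆ pointSet m, #T = 2 * n ∧ ConvexPos T ∧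
      ∃ c, ∀ e ⊆ T, #e = 3 → stepUpColoring g e = c := by
  rintro ⟨T, hTP, hT, hconv, c, hc⟩
  obtain ⟨W, hWT, hW, hcapcup⟩ :=
    hconv.exists_isCap_or_isCup ((injOn_fst_pointSet m).mono (coe_subset.mpr hTP)) (by omega)
  obtain ⟨A, hA, rfl⟩ := subset_image_iff.mp (hWT.trans hTP)
  rw [card_image_of_injective _ pt_injective] at hW
  obtain ⟨z, hz, hinj⟩ := exists_injOn_δ (card_pos.mp (by omega)) hcapcup
  have hK : n ≤ #((A.erase z).image (δ · z)) := by
    rw [card_image_of_injOn hinj, card_erase_of_mem hz]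
    omega
  have hKm : (A.erase z).image (δ · z) ⊆ range m := by
    intro k hk
    obtain ⟨s, hs, rfl⟩ := mem_image.mp hk
    exact mem_range.mpr (δ_lt_of_subset_range (mem_powerset.mp (hA (mem_of_mem_erase hs)))
      (mem_powerset.mp (hA hz)) (ne_of_mem_erase hs))
  obtain ⟨S, hSK, hS⟩ := exists_subset_card_eq hK
  obtain ⟨e, heS, he2, hne⟩ := hg S (hSK.trans hKm) hS c
  obtain ⟨B, hBA, hB3, rfl⟩ := exists_deltaSet_eq hz (heS.trans hSK) he2
  refine hne ?_
  rw [← stepUpColoring_image g B]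
  exact hc _ ((image_subset_image hBA).trans hWT)
    (by rw [card_image_of_injective _ pt_injective, hB3])

theorem exists_genPos_not_exists_monochromatic_convexPos {n : ℕ} (hn : 3 ≤ n) :
    ∃ P : Finset (ℝ × ℝ), #P = 2 ^ 2 ^ (n / 2) ∧ GenPos P ∧
      ∃ χ : Finset (ℝ × ℝ) → Fin 2, ¬ ∃ T ⊆ P, #T = 2 * n ∧ ConvexPos T ∧
        ∃ c, ∀ e ⊆ T, #e = 3 → χ e = c := by
  obtain ⟨g, hg⟩ := exists_pairColoring_range_not_monochromatic (C := Fin 2) (m := 2 ^ (n / 2))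
    (n := n) (by simpa using two_mul_choose_lt_two_pow_choose hn)
  exact ⟨_, card_pointSet _, genPos_pointSet _, stepUpColoring g,
    not_exists_monochromatic_convexPos (by omega) hg⟩

end SteppingUp

theorem GeomRamseyProp3.card_lt {n q N k : ℕ} (h : GeomRamseyProp3 n q N) (hk : k ≤ n)
    {P : Finset (ℝ × ℝ)} (hP : GenPos P) {χ : Finset (ℝ × ℝ) → Fin q}
    (hχ : ¬ ∃ T ⊆ P, #T = k ∧ ConvexPos T ∧ ∃ c, ∀ e ⊆ T, #e = 3 → χ e = c) : #P < N := by
  by_contra! hN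
  obtain ⟨T, hTP, hT, hconv, c, hc⟩ := h P hN hP χ
  obtain ⟨T', hT'T, hT'⟩ := exists_subset_card_eq (hT ▸ hk)
  exact hχ ⟨T', hT'T.trans hTP, hT', hconv.subset hT'T, c, fun e he => hc e (he.trans hT'T)⟩

open SteppingUp in
/-- For sufficiently large `n`, there is a set of `2^(2^⌊n/2⌋)` points in general position
in the plane and a 2-coloring of its triples with no `2n` points in convex position whose
triples are monochromatic.  Consequently `g(K³_n, K³_n) ≥ 2^(2^(c n))` for an absolute
constant `c > 0`. -/
theorem stepping_up_lower_bound :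
    ∃ (n₀ : ℕ) (c : ℝ), 0 < c ∧ ∀ n : ℕ, n₀ ≤ n →
      (∃ P : Finset (ℝ × ℝ), P.card = 2 ^ 2 ^ (n / 2) ∧ GenPos P ∧
        ∃ χ : Finset (ℝ × ℝ) → Fin 2,
          ¬ ∃ T ⊆ P, T.card = 2 * n ∧ ConvexPos T ∧
            ∃ col : Fin 2, ∀ e ⊆ T, e.card = 3 → χ e = col) ∧
      (∀ N : ℕ, GeomRamseyProp3 n 2 N → (2 : ℝ) ^ (2 : ℝ) ^ (c * n) ≤ (N : ℝ)) := by
  refine ⟨8, 1 / 8, by norm_num, fun n hn =>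
    ⟨exists_genPos_not_exists_monochromatic_convexPos (by omega), fun N hN => ?_⟩⟩
  obtain ⟨P, hP, hgen, χ, hχ⟩ := exists_genPos_not_exists_monochromatic_convexPos (n := n / 2)
    (by omega)
  have hPN := hN.card_lt (by omega) hgen hχ
  have hexp : 1 / 8 * (n : ℝ) ≤ (n / 2 / 2 : ℕ) := by
    have h₁ : n ≤ 4 * (n / 2 / 2) + 3 := by omega
    have h₂ : (8 : ℝ) ≤ n := by exact_mod_cast hn
    linarith [(by exact_mod_cast h₁ : (n : ℝ) ≤ 4 * (n / 2 / 2 : ℕ) + 3)]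
  calc (2 : ℝ) ^ (2 : ℝ) ^ (1 / 8 * (n : ℝ)) ≤ 2 ^ (2 : ℝ) ^ ((n / 2 / 2 : ℕ) : ℝ) := by
        gcongr <;> norm_num
    _ = ((2 ^ 2 ^ (n / 2 / 2) : ℕ) : ℝ) := by norm_cast
    _ ≤ N := by rw [← hP]; exact_mod_cast hPN.le
end
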